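/- Let a_i = 2^{−i} · ∏_{j=i+1}^{∞} (1 − 2^{−j}) for each natural number i ≥ 0. Then ∑_{i=0}^{∞} i · a_i = c₀, where c₀ = ∑_{i=1}^{∞} 1/(2^i − 1) is the Erdős–Borwein constant. -/

import Mathlib

/-- `a i = 2^{−i} · ∏_{j=i+1}^{∞} (1 − 2^{−j})`, the infinite product taken over all
integers `j ≥ i + 1` (indexed by `j ↦ j + i + 1` over `ℕ`). -/
noncomputable def a (i : ℕ) : ℝ :=
  (2 : ℝ) ^ (-(i : ℤ)) * ∏' j : ℕ, (1 - (2 : ℝ) ^ (-((j : ℤ) + (i : ℤ) + 1)))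

/-- The Erdős–Borwein constant `c₀ = ∑_{i=1}^{∞} 1/(2^i − 1)`
(indexed by `i ↦ i + 1` over `ℕ`). -/
noncomputable def c₀ : ℝ := ∑' i : ℕ, 1 / ((2 : ℝ) ^ (i + 1) - 1)

/-! The weights `wᵢ = qⁱ ∏_{j>i} (1 - qʲ)` satisfy `(1 - q^{i+1}) w_{i+1} = q wᵢ`. For the
series `S x = ∑ wᵢ xⁱ` and `D x = ∑ i wᵢ xⁱ` this gives `S (q x) = (1 - q x) S x` and
`D (q x) = (1 - q x) D x - q x S x`, so along `x = q^K` the ratio `D / S` drops by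
`q^{K+1} / (1 - q^{K+1})` at each step. As `K → ∞`, `S (q^K) → w₀ > 0` and `D (q^K) → 0`.
Comparing `S (q^K) = S 1 ∏_{k<K} (1 - q^{k+1})` with its limit `w₀` gives `S 1 = 1`, and the
telescoping sum gives `D 1 = ∑_{k≥1} qᵏ / (1 - qᵏ)`; at `q = 1/2` this is the theorem. -/

open Filter Topology Finset

namespace ErdosBorwein

variable {q x : ℝ}

noncomputable def tailProd (q : ℝ) (i : ℕ) : ℝ := ∏' j : ℕ, (1 - q ^ (j + i + 1))

noncomputable def weight (q : ℝ) (i : ℕ) : ℝ := q ^ i * tailProd q i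

lemma summable_pow_add_add_one (hq0 : 0 ≤ q) (hq1 : q < 1) (i : ℕ) :
    Summable (fun j : ℕ => q ^ (j + i + 1)) := by
  simpa [pow_add, mul_assoc] using
    (summable_geometric_of_lt_one hq0 hq1).mul_right (q ^ i * q)

lemma multipliable_one_sub_pow (hq0 : 0 ≤ q) (hq1 : q < 1) (i : ℕ) :
    Multipliable (fun j : ℕ => 1 - q ^ (j + i + 1)) := by
  simpa [sub_eq_add_neg] using
    Real.multipliable_one_add_of_summable (summable_pow_add_add_one hq0 hq1 i).neg

lemma tailProd_pos (hq0 : 0 ≤ q) (hq1 : q < 1) (i : ℕ) : 0 < tailProd q i := by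
  have hfac : ∀ j : ℕ, 0 < 1 - q ^ (j + i + 1) := fun j => by
    linarith [pow_lt_one₀ hq0 hq1 (by omega : j + i + 1 ≠ 0)]
  refine (tprod_nonneg fun j => (hfac j).le).lt_of_ne' ?_
  simpa [tailProd, sub_eq_add_neg] using
    tprod_one_add_ne_zero_of_summable (f := fun j => -q ^ (j + i + 1))
      (fun j => by simpa [sub_eq_add_neg] using (hfac j).ne')
      (by simpa using (summable_pow_add_add_one hq0 hq1 i).abs)

lemma tailProd_le_one (hq0 : 0 ≤ q) (hq1 : q < 1) (i : ℕ) : tailProd q i ≤ 1 := by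
  have h := (multipliable_one_sub_pow hq0 hq1 i).hasProd.tendsto_prod_nat
  refine le_of_tendsto' h fun n => prod_le_one (fun j _ => ?_) (fun j _ => ?_)
  · linarith [pow_le_one₀ hq0 hq1.le (n := j + i + 1)]
  · linarith [pow_nonneg hq0 (j + i + 1)]

lemma tailProd_eq_mul_succ (hq0 : 0 ≤ q) (hq1 : q < 1) (i : ℕ) :
    tailProd q i = (1 - q ^ (i + 1)) * tailProd q (i + 1) := by
  have hshift : ∀ j : ℕ, j + 1 + i + 1 = j + (i + 1) + 1 := fun j => by omega
  rw [tailProd, tprod_eq_zero_mul', zero_add, tailProd]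
  · simp only [hshift]
  · simpa only [hshift] using multipliable_one_sub_pow hq0 hq1 (i + 1)

lemma weight_nonneg (hq0 : 0 ≤ q) (hq1 : q < 1) (i : ℕ) : 0 ≤ weight q i :=
  mul_nonneg (pow_nonneg hq0 i) (tailProd_pos hq0 hq1 i).le

lemma weight_le_pow (hq0 : 0 ≤ q) (hq1 : q < 1) (i : ℕ) : weight q i ≤ q ^ i :=
  mul_le_of_le_one_right (pow_nonneg hq0 i) (tailProd_le_one hq0 hq1 i)

lemma one_sub_pow_mul_weight_succ (hq0 : 0 ≤ q) (hq1 : q < 1) (i : ℕ) :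
    (1 - q ^ (i + 1)) * weight q (i + 1) = q * weight q i := by
  rw [weight, weight, tailProd_eq_mul_succ hq0 hq1 i]
  ring

noncomputable def weightSeries (q x : ℝ) : ℝ := ∑' i : ℕ, weight q i * x ^ i

noncomputable def momentSeries (q x : ℝ) : ℝ := ∑' i : ℕ, (i : ℝ) * weight q i * x ^ i

lemma summable_natCast_pow_mul_weight_mul_pow (hq0 : 0 ≤ q) (hq1 : q < 1) (hx0 : 0 ≤ x)
    (hx1 : x ≤ 1) (m : ℕ) : Summable (fun i : ℕ => (i : ℝ) ^ m * weight q i * x ^ i) := by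
  have hgeom := summable_pow_mul_geometric_of_norm_lt_one m (r := q)
    (by rwa [Real.norm_of_nonneg hq0])
  refine hgeom.of_nonneg_of_le (fun i => by have := weight_nonneg hq0 hq1 i; positivity)
    (fun i => ?_)
  rw [mul_assoc]
  gcongr
  exact (mul_le_of_le_one_right (weight_nonneg hq0 hq1 i) (pow_le_one₀ hx0 hx1)).trans
    (weight_le_pow hq0 hq1 i)

lemma summable_weight_mul_pow (hq0 : 0 ≤ q) (hq1 : q < 1) (hx0 : 0 ≤ x) (hx1 : x ≤ 1) :
    Summable (fun i : ℕ => weight q i * x ^ i) := by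
  simpa using summable_natCast_pow_mul_weight_mul_pow hq0 hq1 hx0 hx1 0

lemma summable_natCast_mul_weight_mul_pow (hq0 : 0 ≤ q) (hq1 : q < 1) (hx0 : 0 ≤ x)
    (hx1 : x ≤ 1) : Summable (fun i : ℕ => (i : ℝ) * weight q i * x ^ i) := by
  simpa using summable_natCast_pow_mul_weight_mul_pow hq0 hq1 hx0 hx1 1

lemma tsum_mul_weight_mul_pow_sub (hq0 : 0 ≤ q) (hq1 : q < 1) (f : ℕ → ℝ)
    (h : Summable fun i : ℕ => f i * weight q i * x ^ i)
    (h' : Summable fun i : ℕ => f i * weight q i * (q * x) ^ i) :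
    ∑' i : ℕ, f i * weight q i * x ^ i - ∑' i : ℕ, f i * weight q i * (q * x) ^ i =
      q * x * ∑' i : ℕ, f (i + 1) * weight q i * x ^ i := by
  rw [← h.tsum_sub h', (h.sub h').tsum_eq_zero_add, ← tsum_mul_left]
  simp only [pow_zero, sub_self, zero_add]
  refine tsum_congr fun i => ?_
  rw [mul_pow]
  linear_combination (f (i + 1) * x ^ (i + 1)) * one_sub_pow_mul_weight_succ hq0 hq1 i

lemma weightSeries_mul_left (hq0 : 0 ≤ q) (hq1 : q < 1) (hx0 : 0 ≤ x) (hx1 : x ≤ 1) :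
    weightSeries q (q * x) = (1 - q * x) * weightSeries q x := by
  have hqx0 : 0 ≤ q * x := mul_nonneg hq0 hx0
  have hqx1 : q * x ≤ 1 := mul_le_one₀ hq1.le hx0 hx1
  have h := tsum_mul_weight_mul_pow_sub hq0 hq1 (fun _ => 1)
    (by simpa using summable_weight_mul_pow hq0 hq1 hx0 hx1)
    (by simpa using summable_weight_mul_pow hq0 hq1 hqx0 hqx1)
  simp only [one_mul] at h
  rw [weightSeries, weightSeries]
  linear_combination -h

lemma momentSeries_mul_left (hq0 : 0 ≤ q) (hq1 : q < 1) (hx0 : 0 ≤ x) (hx1 : x ≤ 1) :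
    momentSeries q (q * x) = (1 - q * x) * momentSeries q x - q * x * weightSeries q x := by
  have hqx0 : 0 ≤ q * x := mul_nonneg hq0 hx0
  have hqx1 : q * x ≤ 1 := mul_le_one₀ hq1.le hx0 hx1
  have hS := summable_weight_mul_pow hq0 hq1 hx0 hx1
  have hD := summable_natCast_mul_weight_mul_pow hq0 hq1 hx0 hx1
  have h := tsum_mul_weight_mul_pow_sub hq0 hq1 (fun i => (i : ℝ)) hD
    (summable_natCast_mul_weight_mul_pow hq0 hq1 hqx0 hqx1)
  change momentSeries q x - momentSeries q (q * x) = _ at h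
  have hsplit : ∑' i : ℕ, ((i + 1 : ℕ) : ℝ) * weight q i * x ^ i =
      momentSeries q x + weightSeries q x := by
    rw [momentSeries, weightSeries, ← hD.tsum_add hS]
    exact tsum_congr fun i => by push_cast; ring
  rw [hsplit] at h
  linear_combination -h

lemma tendsto_tsum_mul_pow_pow {f : ℕ → ℝ} (hf : Summable f) (hq0 : 0 ≤ q) (hq1 : q < 1) :
    Tendsto (fun K : ℕ => ∑' i : ℕ, f i * (q ^ K) ^ i) atTop (𝓝 (f 0)) := by
  have h := tendsto_tsum_of_dominated_convergence (bound := fun i => |f i|) hf.abs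
    (fun i => ((tendsto_pow_atTop_nhds_zero_of_lt_one hq0 hq1).pow i).const_mul (f i))
    (Eventually.of_forall fun K i => ?_)
  · rwa [tsum_eq_single 0 fun i hi => by simp [hi], pow_zero, mul_one] at h
  · rw [norm_mul, Real.norm_eq_abs, norm_pow, Real.norm_of_nonneg (pow_nonneg hq0 K)]
    exact mul_le_of_le_one_right (abs_nonneg _) (pow_le_one₀ (pow_nonneg hq0 K)
      (pow_le_one₀ hq0 hq1.le))

lemma tendsto_prod_range_one_sub_pow (hq0 : 0 ≤ q) (hq1 : q < 1) :
    Tendsto (fun K : ℕ => ∏ k ∈ range K, (1 - q ^ (k + 1))) atTop (𝓝 (tailProd q 0)) := by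
  simpa [tailProd] using (multipliable_one_sub_pow hq0 hq1 0).hasProd.tendsto_prod_nat

lemma weightSeries_pow (hq0 : 0 ≤ q) (hq1 : q < 1) (K : ℕ) :
    weightSeries q (q ^ K) = weightSeries q 1 * ∏ k ∈ range K, (1 - q ^ (k + 1)) := by
  induction K with
  | zero => simp
  | succ K ih =>
    rw [pow_succ', weightSeries_mul_left hq0 hq1 (pow_nonneg hq0 K) (pow_le_one₀ hq0 hq1.le),
      ih, prod_range_succ, ← pow_succ']
    ring

lemma weightSeries_one (hq0 : 0 ≤ q) (hq1 : q < 1) : weightSeries q 1 = 1 := by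
  have hlim : Tendsto (fun K : ℕ => weightSeries q (q ^ K)) atTop (𝓝 (tailProd q 0)) := by
    have h := tendsto_tsum_mul_pow_pow
      (by simpa using summable_weight_mul_pow hq0 hq1 zero_le_one le_rfl) hq0 hq1
    rwa [weight, pow_zero, one_mul] at h
  have hprod : Tendsto (fun K : ℕ => weightSeries q (q ^ K)) atTop
      (𝓝 (weightSeries q 1 * tailProd q 0)) := by
    simpa only [weightSeries_pow hq0 hq1] using
      (tendsto_prod_range_one_sub_pow hq0 hq1).const_mul (weightSeries q 1)
  exact (mul_eq_right₀ (tailProd_pos hq0 hq1 0).ne').1 (tendsto_nhds_unique hprod hlim)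

lemma momentSeries_pow_div (hq0 : 0 ≤ q) (hq1 : q < 1) (K : ℕ) :
    momentSeries q (q ^ K) / ∏ k ∈ range K, (1 - q ^ (k + 1)) =
      momentSeries q 1 - ∑ k ∈ range K, q ^ (k + 1) / (1 - q ^ (k + 1)) := by
  induction K with
  | zero => simp
  | succ K ih =>
    have hstep := momentSeries_mul_left hq0 hq1 (pow_nonneg hq0 K) (pow_le_one₀ hq0 hq1.le)
    rw [← pow_succ', weightSeries_pow hq0 hq1, weightSeries_one hq0 hq1, one_mul] at hstep
    have hP : ∏ k ∈ range K, (1 - q ^ (k + 1)) ≠ 0 :=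
      prod_ne_zero_iff.2 fun k _ => (sub_pos.2 (pow_lt_one₀ hq0 hq1 k.succ_ne_zero)).ne'
    have hK : 1 - q ^ (K + 1) ≠ 0 := (sub_pos.2 (pow_lt_one₀ hq0 hq1 K.succ_ne_zero)).ne'
    rw [hstep, prod_range_succ, sum_range_succ, ← sub_sub, ← ih]
    field_simp

theorem hasSum_pow_div_one_sub_pow (hq0 : 0 ≤ q) (hq1 : q < 1) :
    HasSum (fun k : ℕ => q ^ (k + 1) / (1 - q ^ (k + 1)))
      (∑' i : ℕ, (i : ℝ) * weight q i) := by
  have hM : momentSeries q 1 = ∑' i : ℕ, (i : ℝ) * weight q i := by simp [momentSeries]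
  rw [← hM, hasSum_iff_tendsto_nat_of_nonneg fun k =>
    div_nonneg (pow_nonneg hq0 _) (sub_nonneg.2 (pow_le_one₀ hq0 hq1.le))]
  have hD : Tendsto (fun K : ℕ => momentSeries q (q ^ K)) atTop (𝓝 0) := by
    have h := tendsto_tsum_mul_pow_pow
      (by simpa using summable_natCast_mul_weight_mul_pow hq0 hq1 zero_le_one le_rfl) hq0 hq1
    rwa [Nat.cast_zero, zero_mul] at h
  have hratio := hD.div (tendsto_prod_range_one_sub_pow hq0 hq1) (tailProd_pos hq0 hq1 0).ne'
  simpa [momentSeries_pow_div hq0 hq1] using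
    (tendsto_const_nhds (x := momentSeries q 1)).sub hratio

end ErdosBorwein

open ErdosBorwein

lemma a_eq_weight (i : ℕ) : a i = weight 2⁻¹ i := by
  have hzpow (n : ℕ) : (2 : ℝ) ^ (-(n : ℤ)) = 2⁻¹ ^ n := by
    rw [zpow_neg, zpow_natCast, inv_pow]
  rw [a, weight, tailProd, hzpow]
  congr 1
  refine tprod_congr fun j => ?_
  rw [← hzpow]
  push_cast
  ring_nf

lemma one_div_two_pow_sub_one (n : ℕ) :
    1 / ((2 : ℝ) ^ (n + 1) - 1) = 2⁻¹ ^ (n + 1) / (1 - 2⁻¹ ^ (n + 1)) := by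
  have h : (1 : ℝ) < 2 ^ (n + 1) := one_lt_pow₀ one_lt_two n.succ_ne_zero
  rw [inv_pow]
  field_simp

/-- `∑_{i=0}^{∞} i · a_i = c₀`. -/
theorem tsum_i_mul_a : ∑' i : ℕ, (i : ℝ) * a i = c₀ := by
  simp only [a_eq_weight, c₀, one_div_two_pow_sub_one]
  exact (hasSum_pow_div_one_sub_pow (by norm_num) (by norm_num)).tsum_eq.symm
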